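/- Let q be a prime with q ≡ 7 (mod 8), and write the fundamental unit of Q(√q) as ε_q = c' + d'√q with positive integers c', d'. Then c' + 1 is a perfect square, and there exist integers d₁', d₂' such that 2·ε_q = (d₁' + d₂'√q)² in Q(√q) and d₁'² - q·d₂'² = 2. -/

import Mathlib

noncomputable section

open IntermediateField

/-- Conditions (1): `p` and `q` are odd primes with `p ≡ 1 (mod 4)`, `q ≡ 3 (mod 4)`,
`(2/p) = -1`, `(2/q) = 1` and `(p/q) = -1`. -/
def Cond1 (p q : ℕ) : Prop :=
  p.Prime ∧ q.Prime ∧ p % 4 = 1 ∧ q % 4 = 3 ∧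
    jacobiSym 2 p = -1 ∧ jacobiSym 2 q = 1 ∧ jacobiSym (p : ℤ) q = -1

/-- `x` is a unit of the ring of integers of the subfield `K` of `ℝ`. -/
def IsUnitOfIntegers (K : IntermediateField ℚ ℝ) (x : ℝ) : Prop :=
  x ∈ K ∧ IsIntegral ℤ x ∧ IsIntegral ℤ x⁻¹

/-- `ε` is the fundamental unit of `ℚ(√d)`: it is a unit of the ring of integers,
it is `> 1`, and every unit is `±ε^n` for some `n : ℤ`. -/
def IsFundUnit (d : ℕ) (ε : ℝ) : Prop :=
  1 < ε ∧ IsUnitOfIntegers (adjoin ℚ {Real.sqrt d}) ε ∧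
    ∀ x : ℝ, IsUnitOfIntegers (adjoin ℚ {Real.sqrt d}) x →
      ∃ n : ℤ, x = ε ^ n ∨ x = -ε ^ n

/-!
Since `ε_q⁻¹` is an algebraic integer, the norm `c'² - q d'²` is a unit, and it is not `-1`
because `a² + 1 = q b²` has no solution modulo 4. Hence `(c' - 1)(c' + 1) = q d'²`.
If `c'` is even, the two factors are coprime and, as `a² + 2 = q b²` has no solution modulo 8,
`c' + 1 = a²` and `c' - 1 = q b²`, so that `2 ε_q = (a + b√q)²`. If `c'` is odd, the same
argument applied to `((c' - 1)/2)((c' + 1)/2) = q (d'/2)²` writes `ε_q` as the square of the unit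
`a + b√q`, which contradicts fundamentality.
-/

open Polynomial

namespace Int

lemma sq_add_one_ne_mul_sq {q : ℤ} (hq : q % 4 = 3) (a b : ℤ) : a ^ 2 + 1 ≠ q * b ^ 2 := by
  intro h
  have hq' : (q : ZMod 4) = 3 := by rw [← ZMod.intCast_mod q 4, Nat.cast_ofNat, hq]; rfl
  have h4 := congrArg (Int.cast : ℤ → ZMod 4) h
  push_cast at h4
  rw [hq'] at h4
  generalize (a : ZMod 4) = x, (b : ZMod 4) = y at h4
  revert x y; decide

lemma sq_add_two_ne_mul_sq {q : ℤ} (hq : q % 8 = 7) (a b : ℤ) : a ^ 2 + 2 ≠ q * b ^ 2 := by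
  intro h
  have hq' : (q : ZMod 8) = 7 := by rw [← ZMod.intCast_mod q 8, Nat.cast_ofNat, hq]; rfl
  have h8 := congrArg (Int.cast : ℤ → ZMod 8) h
  push_cast at h8
  rw [hq'] at h8
  generalize (a : ZMod 8) = x, (b : ZMod 8) = y at h8
  revert x y; decide

lemma exists_sq_of_isCoprime_of_mul_eq_sq {x y z : ℤ} (hx : 0 < x) (hxy : IsCoprime x y)
    (h : x * y = z ^ 2) : ∃ a, 0 ≤ a ∧ x = a ^ 2 := by
  obtain ⟨a, ha | ha⟩ := Int.sq_of_isCoprime hxy h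
  · exact ⟨|a|, abs_nonneg a, by rw [sq_abs, ha]⟩
  · nlinarith [sq_nonneg a]

lemma exists_prime_mul_sq_and_sq_of_dvd {q : ℕ} (hq : q.Prime) {x y z : ℤ} (hx : 0 < x)
    (hy : 0 < y) (hxy : IsCoprime x y) (h : x * y = q * z ^ 2) (hqx : (q : ℤ) ∣ x) :
    ∃ a b, 0 ≤ a ∧ 0 ≤ b ∧ x = q * b ^ 2 ∧ y = a ^ 2 := by
  obtain ⟨t, rfl⟩ := hqx
  have hq0 : (0 : ℤ) < q := by exact_mod_cast hq.pos
  have ht : 0 < t := pos_of_mul_pos_right hx hq0.le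
  have hty : t * y = z ^ 2 := mul_left_cancel₀ hq0.ne' (by linear_combination h)
  have hcop : IsCoprime t y := hxy.of_isCoprime_of_dvd_left (dvd_mul_left t q)
  obtain ⟨b, hb, rfl⟩ := exists_sq_of_isCoprime_of_mul_eq_sq ht hcop hty
  obtain ⟨a, ha, rfl⟩ :=
    exists_sq_of_isCoprime_of_mul_eq_sq hy hcop.symm (by rw [mul_comm, hty])
  exact ⟨a, b, ha, hb, rfl, rfl⟩

lemma sq_and_prime_mul_sq_of_mul_eq {q : ℕ} (hq : q.Prime) {x y z : ℤ} (hx : 0 < x)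
    (hy : 0 < y) (hxy : IsCoprime x y) (h : x * y = q * z ^ 2) :
    (∃ a b, 0 ≤ a ∧ 0 ≤ b ∧ x = q * b ^ 2 ∧ y = a ^ 2) ∨
      ∃ a b, 0 ≤ a ∧ 0 ≤ b ∧ x = a ^ 2 ∧ y = q * b ^ 2 := by
  rcases (Nat.prime_iff_prime_int.mp hq).dvd_mul.mp ⟨z ^ 2, h⟩ with hqx | hqy
  · exact .inl (exists_prime_mul_sq_and_sq_of_dvd hq hx hy hxy h hqx)
  · obtain ⟨a, b, ha, hb, hyb, hxa⟩ :=
      exists_prime_mul_sq_and_sq_of_dvd hq hy hx hxy.symm (by rw [mul_comm, h]) hqy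
    exact .inr ⟨a, b, ha, hb, hxa, hyb⟩

section Pell

variable {q : ℕ} {c d : ℤ}

lemma one_lt_of_sq_sub_mul_sq_eq_one (hq : 0 < q) (hc : 0 < c) (hd : d ≠ 0)
    (h : c ^ 2 - q * d ^ 2 = 1) : 1 < c := by
  have : (0 : ℤ) < q * d ^ 2 := by positivity
  nlinarith

lemma exists_sq_of_sq_sub_mul_sq_eq_one_of_even (hq : q.Prime) (hq8 : q % 8 = 7) (hc : 0 < c)
    (hd : 0 < d) (h : c ^ 2 - q * d ^ 2 = 1) (hce : Even c) :
    ∃ a b, c + 1 = a ^ 2 ∧ c - 1 = q * b ^ 2 ∧ d = a * b := by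
  obtain ⟨r, rfl⟩ := hce
  have hc1 := one_lt_of_sq_sub_mul_sq_eq_one hq.pos hc hd.ne' h
  have hcop : IsCoprime (r + r - 1) (r + r + 1) := ⟨r, 1 - r, by ring⟩
  have hprod : (r + r - 1) * (r + r + 1) = q * d ^ 2 := by linear_combination h
  rcases sq_and_prime_mul_sq_of_mul_eq hq (by omega) (by omega) hcop hprod with
    ⟨a, b, ha, hb, hsub, hadd⟩ | ⟨a, b, -, -, hsub, hadd⟩
  · refine ⟨a, b, hadd, hsub, (pow_left_inj₀ hd.le (mul_nonneg ha hb) two_ne_zero).mp ?_⟩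
    have hq0 : (q : ℤ) ≠ 0 := by exact_mod_cast hq.ne_zero
    exact mul_left_cancel₀ hq0
      (by linear_combination -hprod + (r + r + 1) * hsub + q * b ^ 2 * hadd)
  · exact (sq_add_two_ne_mul_sq (q := q) (by omega) a b (by linear_combination hadd - hsub)).elim

lemma exists_two_mul_sq_of_sq_sub_mul_sq_eq_one_of_odd (hq : q.Prime) (hq8 : q % 8 = 7)
    (hc : 0 < c) (hd : 0 < d) (h : c ^ 2 - q * d ^ 2 = 1) (hco : Odd c) :
    ∃ a b, c + 1 = 2 * a ^ 2 ∧ c - 1 = 2 * q * b ^ 2 ∧ d = 2 * (a * b) := by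
  obtain ⟨x, rfl⟩ := hco
  have hc1 := one_lt_of_sq_sub_mul_sq_eq_one hq.pos hc hd.ne' h
  obtain ⟨e, rfl⟩ : Even d := by
    have : Even ((q : ℤ) * d ^ 2) := ⟨2 * x * (x + 1), by linear_combination -h⟩
    rcases Int.even_mul.mp this with hq2 | hd2
    · exact absurd hq2 (by rw [Int.not_even_iff]; omega)
    · exact (Int.even_pow.mp hd2).1
  have hcop : IsCoprime x (x + 1) := ⟨-1, 1, by ring⟩
  have hprod : x * (x + 1) = q * e ^ 2 := by linarith
  rcases sq_and_prime_mul_sq_of_mul_eq hq (by omega) (by omega) hcop hprod with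
    ⟨a, b, ha, hb, hsub, hadd⟩ | ⟨a, b, -, -, hsub, hadd⟩
  · refine ⟨a, b, by rw [← hadd]; ring, by rw [hsub]; ring, ?_⟩
    have hq0 : (q : ℤ) ≠ 0 := by exact_mod_cast hq.ne_zero
    have he : e = a * b := (pow_left_inj₀ (by omega) (mul_nonneg ha hb) two_ne_zero).mp
      (mul_left_cancel₀ hq0 (by linear_combination -hprod + (x + 1) * hsub + q * b ^ 2 * hadd))
    rw [he]; ring
  · exact (sq_add_one_ne_mul_sq (q := q) (by omega) a b (by linear_combination hadd - hsub)).elim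

end Pell

end Int

section QuadraticIntegers

variable {d : ℕ}

lemma exists_intCast_eq_norm_of_isIntegral (hd : Irrational √d) {r s : ℚ} (hs : s ≠ 0)
    (h : IsIntegral ℤ ((r : ℝ) + s * √d)) : ∃ n : ℤ, (n : ℚ) = r ^ 2 - d * s ^ 2 := by
  set x : ℝ := r + s * √d
  set P : ℚ[X] := X ^ 2 - C (2 * r) * X + C (r ^ 2 - d * s ^ 2)
  have hPx : aeval x P = 0 := by
    have : √d ^ 2 = d := Real.sq_sqrt d.cast_nonneg
    simp only [P, x, map_add, map_sub, map_pow, map_mul, aeval_X, aeval_C, eq_ratCast]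
    push_cast
    linear_combination s ^ 2 * this
  have hPdeg : P.natDegree = 2 := by simp only [P]; compute_degree!
  have hPmonic : P.Monic := by simp only [P]; monicity!
  have hx : x ∉ (algebraMap ℚ ℝ).range := by
    rintro ⟨t, ht⟩
    exact ((hd.ratCast_mul hs).ratCast_add r) ⟨t, by simpa using ht⟩
  have hmin : P = minpoly ℚ x := by
    refine eq_of_monic_of_dvd_of_natDegree_le (minpoly.monic h.tower_top) hPmonic
      (minpoly.dvd ℚ x hPx) ?_
    rw [hPdeg]
    exact (minpoly.two_le_natDegree_iff h.tower_top).mpr hx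
  have hP0 : P.coeff 0 = r ^ 2 - d * s ^ 2 := by
    simp only [P, coeff_add, coeff_sub, coeff_C_zero, coeff_X_pow, coeff_C_mul, coeff_X_zero]
    norm_num
  refine ⟨(minpoly ℤ x).coeff 0, ?_⟩
  rw [← hP0, hmin, minpoly.isIntegrallyClosed_eq_field_fractions' ℚ h, coeff_map, eq_intCast]

lemma isUnit_sq_sub_mul_sq_of_isIntegral_inv (hd : Irrational √d) {a b : ℤ} (hb : b ≠ 0)
    (h : IsIntegral ℤ ((a : ℝ) + b * √d)⁻¹) : IsUnit (a ^ 2 - d * b ^ 2) := by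
  set N := a ^ 2 - d * b ^ 2
  have hbd : Irrational (b * √d) := hd.intCast_mul hb
  have hN : (N : ℝ) = (a + b * √d) * (a - b * √d) := by
    have : √d ^ 2 = d := Real.sq_sqrt d.cast_nonneg
    push_cast [N]
    linear_combination (b : ℝ) ^ 2 * this
  have hNR : (N : ℝ) ≠ 0 := by
    rw [hN]
    exact mul_ne_zero (hbd.intCast_add a).ne_zero (by simpa [sub_eq_add_neg] using
      (hbd.neg.intCast_add a).ne_zero)
  have hN0 : (N : ℚ) ≠ 0 := by exact_mod_cast hNR
  have hinv : ((a + b * √d)⁻¹ : ℝ) =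
      ((a / N : ℚ) : ℝ) + ((-b / N : ℚ) : ℝ) * √d := by
    refine inv_eq_of_mul_eq_one_right ?_
    push_cast
    field_simp
    linear_combination -hN
  have hbN : (-b / N : ℚ) ≠ 0 := div_ne_zero (by exact_mod_cast neg_ne_zero.mpr hb) hN0
  obtain ⟨n, hn⟩ := exists_intCast_eq_norm_of_isIntegral hd hbN (hinv ▸ h)
  refine IsUnit.of_mul_eq_one n ?_
  have : (N : ℚ) * n = 1 := by
    rw [hn]
    field_simp
    push_cast [N]
    ring
  exact_mod_cast this

lemma sq_sub_mul_sq_eq_one_of_isIntegral_inv (hd : Irrational √d) (hd4 : d % 4 = 3) {a b : ℤ}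
    (hb : b ≠ 0) (h : IsIntegral ℤ ((a : ℝ) + b * √d)⁻¹) : a ^ 2 - d * b ^ 2 = 1 := by
  rcases Int.isUnit_iff.mp (isUnit_sq_sub_mul_sq_of_isIntegral_inv hd hb h) with h1 | h1
  · exact h1
  · exact (Int.sq_add_one_ne_mul_sq (q := d) (by omega) a b (by linear_combination h1)).elim

lemma isIntegral_intCast_add_intCast_mul_sqrt (a b : ℤ) :
    IsIntegral ℤ ((a : ℝ) + b * √d) := by
  have hsqrt : IsIntegral ℤ √d := by
    refine ⟨X ^ 2 - C (d : ℤ), monic_X_pow_sub_C _ two_ne_zero, ?_⟩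
    simp [Real.sq_sqrt d.cast_nonneg]
  exact isIntegral_algebraMap.add (isIntegral_algebraMap.mul hsqrt)

lemma intCast_add_intCast_mul_sqrt_mem_adjoin (a b : ℤ) :
    (a : ℝ) + b * √d ∈ adjoin ℚ {√(d : ℝ)} :=
  add_mem (intCast_mem _ a) (mul_mem (intCast_mem _ b) (mem_adjoin_simple_self ℚ _))

lemma isUnitOfIntegers_of_sq_sub_mul_sq_eq_one {a b : ℤ} (h : a ^ 2 - d * b ^ 2 = 1) :
    IsUnitOfIntegers (adjoin ℚ {√(d : ℝ)}) (a + b * √d) := by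
  have hinv : ((a : ℝ) + b * √d)⁻¹ = a + (-b : ℤ) * √d := by
    refine inv_eq_of_mul_eq_one_right ?_
    have : √d ^ 2 = d := Real.sq_sqrt d.cast_nonneg
    have hR : (a : ℝ) ^ 2 - d * b ^ 2 = 1 := by exact_mod_cast h
    push_cast
    linear_combination hR - (b : ℝ) ^ 2 * this
  refine ⟨intCast_add_intCast_mul_sqrt_mem_adjoin a b,
    isIntegral_intCast_add_intCast_mul_sqrt a b, ?_⟩
  rw [hinv]
  exact isIntegral_intCast_add_intCast_mul_sqrt a (-b)

lemma IsFundUnit.sq_ne {ε η : ℝ} (hε : IsFundUnit d ε)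
    (hη : IsUnitOfIntegers (adjoin ℚ {√(d : ℝ)}) η) : η ^ 2 ≠ ε := by
  obtain ⟨n, hn⟩ := hε.2.2 η hη
  have hsq : η ^ 2 = ε ^ (2 * n) := by rcases hn with rfl | rfl <;> rw [zpow_mul'] <;> simp
  intro h
  have h2n : 2 * n = 1 := zpow_right_injective₀ (zero_lt_one.trans hε.1) hε.1.ne'
    (hsq.symm.trans (h.trans (zpow_one ε).symm))
  omega

end QuadraticIntegers

theorem statement15 (q : ℕ) (hq : q.Prime) (hq8 : q % 8 = 7) (εq : ℝ)
    (hεq : IsFundUnit q εq) (c' d' : ℤ) (hc : 0 < c') (hd : 0 < d')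
    (heq : εq = (c' : ℝ) + (d' : ℝ) * Real.sqrt q) :
    (∃ s : ℤ, c' + 1 = s ^ 2) ∧
    ∃ d₁' d₂' : ℤ, 2 * εq = ((d₁' : ℝ) + (d₂' : ℝ) * Real.sqrt q) ^ 2 ∧
      d₁' ^ 2 - (q : ℤ) * d₂' ^ 2 = 2 := by
  have hsqrt : √(q : ℝ) ^ 2 = q := Real.sq_sqrt q.cast_nonneg
  have hnorm : c' ^ 2 - q * d' ^ 2 = 1 :=
    sq_sub_mul_sq_eq_one_of_isIntegral_inv hq.irrational_sqrt (by omega) hd.ne'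
      (heq ▸ hεq.2.1.2.2)
  rcases Int.even_or_odd c' with hce | hco
  · obtain ⟨a, b, hadd, hsub, rfl⟩ :=
      Int.exists_sq_of_sq_sub_mul_sq_eq_one_of_even hq hq8 hc hd hnorm hce
    refine ⟨⟨a, hadd⟩, a, b, ?_, by linear_combination hsub - hadd⟩
    have haddR : (c' : ℝ) + 1 = a ^ 2 := by exact_mod_cast hadd
    have hsubR : (c' : ℝ) - 1 = q * b ^ 2 := by exact_mod_cast hsub
    rw [heq]
    push_cast
    linear_combination haddR + hsubR - (b : ℝ) ^ 2 * hsqrt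
  · obtain ⟨a, b, hadd, hsub, rfl⟩ :=
      Int.exists_two_mul_sq_of_sq_sub_mul_sq_eq_one_of_odd hq hq8 hc hd hnorm hco
    have haddR : (c' : ℝ) + 1 = 2 * a ^ 2 := by exact_mod_cast hadd
    have hsubR : (c' : ℝ) - 1 = 2 * q * b ^ 2 := by exact_mod_cast hsub
    refine (hεq.sq_ne (isUnitOfIntegers_of_sq_sub_mul_sq_eq_one (a := a) (b := b)
      (by linarith)) ?_).elim
    rw [heq]
    push_cast
    linear_combination (-haddR - hsubR) / 2 + (b : ℝ) ^ 2 * hsqrt
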